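/- Let w₀ ≠ 0 be a real constant. Assume that for every h* > 0 there is exactly one three times differentiable function f*_{h*} : ℝ → ℝ satisfying f'''(η) + (1/2) f(η) f''(η) = 0 for all η ≥ 0, f(0) = 0, f'(0) = h*^{1/2}, and f''(0) = w₀; assume further that the limit L(h*) := lim_{η→∞} f*_{h*}'(η) exists with L(h*) + h*^{1/2} > 0 for every h* > 0, and that every three times differentiable solution f of the Sakiadis problem satisfies f''(0)/w₀ > 0. Define λ(h*) := (L(h*) + h*^{1/2})^{1/2} and Γ(h*) := λ(h*)^{−4} h* − 1. Then the map sending h* to the function η ↦ λ(h*)^{−1} · f*_{h*}(λ(h*)^{−1} η) is a bijection from { h* > 0 : Γ(h*) = 0 } onto the set of three times differentiable solutions of the Sakiadis problem; in particular the Sakiadis problem has a unique solution if and only if Γ has a unique zero in (0, ∞). -/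

import Mathlib

open Real Filter Topology

/-- `f` is three times differentiable. -/
def ThreeDiff (f : ℝ → ℝ) : Prop :=
  Differentiable ℝ f ∧ Differentiable ℝ (deriv f) ∧ Differentiable ℝ (deriv (deriv f))

/-- The Sakiadis equation f''' + (1/2) f f'' = 0 on the half line. -/
def SakEq (f : ℝ → ℝ) : Prop :=
  ∀ η : ℝ, 0 ≤ η → deriv (deriv (deriv f)) η + (1 / 2) * f η * deriv (deriv f) η = 0

/-- `f` is a solution of the Sakiadis problem. -/
def SakSol (f : ℝ → ℝ) : Prop :=
  ThreeDiff f ∧ SakEq f ∧ f 0 = 0 ∧ deriv f 0 = 1 ∧ Tendsto (deriv f) atTop (𝓝 0)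

lemma aux_diff (g : ℝ → ℝ) (hg : Differentiable ℝ g) (a c : ℝ) :
    Differentiable ℝ (fun η => a * g (c * η)) :=
  (hg.comp (differentiable_id.const_mul c)).const_mul a

lemma aux_deriv (g : ℝ → ℝ) (hg : Differentiable ℝ g) (a c : ℝ) :
    deriv (fun η => a * g (c * η)) = fun η => a * c * deriv g (c * η) := by
  funext η
  have h1 : HasDerivAt (fun η : ℝ => g (c * η)) (deriv g (c * η) * c) η :=
    ((hg (c * η)).hasDerivAt).comp η ((hasDerivAt_id η).const_mul c |>.congr_deriv (by ring))
  have h2 := h1.const_mul a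
  rw [h2.deriv]; ring

noncomputable def Sc (c : ℝ) (f : ℝ → ℝ) : ℝ → ℝ := fun η => c * f (c * η)

lemma Sc_deriv (c : ℝ) (f : ℝ → ℝ) (hf : Differentiable ℝ f) :
    deriv (Sc c f) = fun η => c ^ 2 * deriv f (c * η) := by
  have := aux_deriv f hf c c
  unfold Sc; rw [this]; funext η; ring

lemma Sc_deriv2 (c : ℝ) (f : ℝ → ℝ) (hf : Differentiable ℝ f)
    (hf2 : Differentiable ℝ (deriv f)) :
    deriv (deriv (Sc c f)) = fun η => c ^ 3 * deriv (deriv f) (c * η) := by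
  rw [Sc_deriv c f hf, aux_deriv _ hf2]
  funext η; ring

lemma Sc_deriv3 (c : ℝ) (f : ℝ → ℝ) (hf : ThreeDiff f) :
    deriv (deriv (deriv (Sc c f))) = fun η => c ^ 4 * deriv (deriv (deriv f)) (c * η) := by
  rw [Sc_deriv2 c f hf.1 hf.2.1, aux_deriv _ hf.2.2]
  funext η; ring

lemma Sc_threeDiff (c : ℝ) (f : ℝ → ℝ) (hf : ThreeDiff f) : ThreeDiff (Sc c f) := by
  refine ⟨aux_diff f hf.1 c c, ?_, ?_⟩
  · rw [Sc_deriv c f hf.1]; exact aux_diff _ hf.2.1 _ _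
  · rw [Sc_deriv2 c f hf.1 hf.2.1]; exact aux_diff _ hf.2.2 _ _

lemma Sc_sakEq (c : ℝ) (hc : 0 < c) (f : ℝ → ℝ) (hf : ThreeDiff f) (hs : SakEq f) :
    SakEq (Sc c f) := by
  intro η hη
  rw [Sc_deriv3 c f hf, Sc_deriv2 c f hf.1 hf.2.1]
  have key := hs (c * η) (by positivity)
  simp only [Sc]
  linear_combination c ^ 4 * key

lemma Sc_Sc' (c : ℝ) (hc : c ≠ 0) (f : ℝ → ℝ) : Sc c⁻¹ (Sc c f) = f := by
  funext η; simp only [Sc]; field_simp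

lemma Sc_tendsto (c : ℝ) (hc : 0 < c) (f : ℝ → ℝ) (hf : Differentiable ℝ f) (l : ℝ)
    (h : Tendsto (deriv f) atTop (𝓝 l)) :
    Tendsto (deriv (Sc c f)) atTop (𝓝 (c ^ 2 * l)) := by
  rw [Sc_deriv c f hf]
  exact (h.comp (tendsto_atTop_atTop_of_monotone (fun a b hab => by nlinarith)
    (fun b => ⟨b / c, by field_simp; exact le_refl b⟩))).const_mul _

lemma half_pow_two (x : ℝ) (hx : 0 ≤ x) : (x ^ ((1 : ℝ) / 2)) ^ 2 = x := by
  rw [← Real.rpow_natCast (x ^ ((1 : ℝ) / 2)) 2, ← Real.rpow_mul hx]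
  norm_num

lemma half_pow_four (x : ℝ) (hx : 0 ≤ x) : (x ^ ((1 : ℝ) / 2)) ^ 4 = x ^ 2 := by
  rw [← Real.rpow_natCast (x ^ ((1 : ℝ) / 2)) 4, ← Real.rpow_mul hx,
    ← Real.rpow_natCast x 2]
  norm_num

lemma sq_half (c : ℝ) (hc : 0 ≤ c) : ((c ^ 2 : ℝ)) ^ ((1 : ℝ) / 2) = c := by
  rw [← Real.rpow_natCast c 2, ← Real.rpow_mul hc]
  norm_num

lemma pow4_half (c : ℝ) (hc : 0 ≤ c) : ((c ^ 4 : ℝ)) ^ ((1 : ℝ) / 2) = c ^ 2 := by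
  rw [← Real.rpow_natCast c 4, ← Real.rpow_mul hc, ← Real.rpow_natCast c 2]
  norm_num

lemma cube_third (t : ℝ) (ht : 0 ≤ t) : (t ^ ((1 : ℝ) / 3)) ^ 3 = t := by
  rw [← Real.rpow_natCast (t ^ ((1 : ℝ) / 3)) 3, ← Real.rpow_mul ht]
  norm_num

lemma pos_pow_inj (a b : ℝ) (ha : 0 < a) (hb : 0 < b) (n : ℕ) (hn : n ≠ 0)
    (h : a ^ n = b ^ n) : a = b := by
  rcases lt_trichotomy a b with h' | h' | h'
  · exfalso; have := pow_lt_pow_left₀ h' ha.le hn; linarith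
  · exact h'
  · exfalso; have := pow_lt_pow_left₀ h' hb.le hn; linarith

theorem stmt11 (w₀ : ℝ) (hw₀ : w₀ ≠ 0) (fstar : ℝ → ℝ → ℝ) (L : ℝ → ℝ)
    -- existence and uniqueness of the solution of the Sakiadis IVP for every h* > 0
    (hivp_ex : ∀ h : ℝ, 0 < h →
      ThreeDiff (fstar h) ∧ SakEq (fstar h) ∧
      fstar h 0 = 0 ∧ deriv (fstar h) 0 = h ^ ((1 : ℝ) / 2) ∧
      deriv (deriv (fstar h)) 0 = w₀)
    (hivp_uniq : ∀ h : ℝ, 0 < h → ∀ g : ℝ → ℝ,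
      ThreeDiff g → SakEq g → g 0 = 0 → deriv g 0 = h ^ ((1 : ℝ) / 2) →
      deriv (deriv g) 0 = w₀ → g = fstar h)
    -- the limit of the first derivative at infinity exists, with L(h*) + h*^{1/2} > 0
    (hlim : ∀ h : ℝ, 0 < h → Tendsto (deriv (fstar h)) atTop (𝓝 (L h)))
    (hLpos : ∀ h : ℝ, 0 < h → 0 < L h + h ^ ((1 : ℝ) / 2))
    -- every solution of the Sakiadis problem satisfies f''(0)/w₀ > 0
    (hsign : ∀ f : ℝ → ℝ, SakSol f → 0 < deriv (deriv f) 0 / w₀)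
    (lam Γ : ℝ → ℝ)
    (hlam : ∀ h : ℝ, lam h = (L h + h ^ ((1 : ℝ) / 2)) ^ ((1 : ℝ) / 2))
    (hΓ : ∀ h : ℝ, Γ h = (lam h ^ 4)⁻¹ * h - 1) :
    Set.BijOn (fun h : ℝ => fun η : ℝ => (lam h)⁻¹ * fstar h ((lam h)⁻¹ * η))
      {h : ℝ | 0 < h ∧ Γ h = 0} {f : ℝ → ℝ | SakSol f} ∧
    ((∃! f : ℝ → ℝ, SakSol f) ↔ (∃! h : ℝ, 0 < h ∧ Γ h = 0)) := by
  -- basic facts for h in the set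
  have hlam_pos : ∀ h : ℝ, 0 < h → 0 < lam h := fun h hh => by
    rw [hlam]; exact Real.rpow_pos_of_pos (hLpos h hh) _
  have hlam_sq : ∀ h : ℝ, 0 < h → lam h ^ 2 = L h + h ^ ((1 : ℝ) / 2) := fun h hh => by
    rw [hlam]; exact half_pow_two _ (hLpos h hh).le
  have hlam4 : ∀ h : ℝ, 0 < h → lam h ^ 4 = (L h + h ^ ((1 : ℝ) / 2)) ^ 2 := fun h hh => by
    rw [hlam]; exact half_pow_four _ (hLpos h hh).le
  -- for h in the zero set, λ(h)^4 = h and L h = 0, λ(h)^2 = h^(1/2)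
  have key : ∀ h : ℝ, 0 < h ∧ Γ h = 0 →
      lam h ^ 4 = h ∧ L h = 0 ∧ lam h ^ 2 = h ^ ((1 : ℝ) / 2) := by
    rintro h ⟨hh, hΓ0⟩
    have hl4 : lam h ^ 4 = h := by
      rw [hΓ h] at hΓ0
      have hne : lam h ^ 4 ≠ 0 := pow_ne_zero _ (hlam_pos h hh).ne'
      field_simp [hne] at hΓ0
      rw [sub_eq_zero, div_eq_one_iff_eq hne] at hΓ0; linarith
    have hsq : (0 : ℝ) < h ^ ((1 : ℝ) / 2) := Real.rpow_pos_of_pos hh _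
    have h2 : (L h + h ^ ((1 : ℝ) / 2)) ^ 2 = (h ^ ((1 : ℝ) / 2)) ^ 2 := by
      rw [← hlam4 h hh, hl4, half_pow_two h hh.le]
    have heq : L h + h ^ ((1 : ℝ) / 2) = h ^ ((1 : ℝ) / 2) :=
      pos_pow_inj _ _ (hLpos h hh) hsq 2 (by norm_num) h2
    exact ⟨hl4, by linarith, by rw [hlam_sq h hh, heq]⟩
  -- the map sends the zero set into the solution set
  have hmaps : ∀ h : ℝ, 0 < h ∧ Γ h = 0 → SakSol (Sc (lam h)⁻¹ (fstar h)) := by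
    rintro h hhΓ
    obtain ⟨hh, hΓ0⟩ := hhΓ
    obtain ⟨hl4, hL0, hl2⟩ := key h ⟨hh, hΓ0⟩
    obtain ⟨htd, hsak, hf0, hf1, hf2⟩ := hivp_ex h hh
    have hlp := hlam_pos h hh
    have hcp : 0 < (lam h)⁻¹ := inv_pos.2 hlp
    have hsq : (0 : ℝ) < h ^ ((1 : ℝ) / 2) := Real.rpow_pos_of_pos hh _
    refine ⟨Sc_threeDiff _ _ htd, Sc_sakEq _ hcp _ htd hsak, ?_, ?_, ?_⟩
    · show (lam h)⁻¹ * fstar h ((lam h)⁻¹ * 0) = 0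
      rw [mul_zero, hf0, mul_zero]
    · rw [Sc_deriv _ _ htd.1]
      show (lam h)⁻¹ ^ 2 * deriv (fstar h) ((lam h)⁻¹ * 0) = 1
      rw [mul_zero, hf1, inv_pow, ← hl2]
      field_simp
    · have := Sc_tendsto (lam h)⁻¹ hcp (fstar h) htd.1 (L h) (hlim h hh)
      rwa [hL0, mul_zero] at this
  have hbij : Set.BijOn (fun h : ℝ => fun η : ℝ => (lam h)⁻¹ * fstar h ((lam h)⁻¹ * η))
      {h : ℝ | 0 < h ∧ Γ h = 0} {f : ℝ → ℝ | SakSol f} := by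
    refine ⟨fun h hh => hmaps h hh, ?_, ?_⟩
    · -- InjOn
      intro h₁ hh₁ h₂ hh₂ heq
      obtain ⟨hl4₁, _, _⟩ := key h₁ hh₁
      obtain ⟨hl4₂, _, _⟩ := key h₂ hh₂
      obtain ⟨htd₁, _, _, _, hf2₁⟩ := hivp_ex h₁ hh₁.1
      obtain ⟨htd₂, _, _, _, hf2₂⟩ := hivp_ex h₂ hh₂.1
      have hlp₁ := hlam_pos h₁ hh₁.1
      have hlp₂ := hlam_pos h₂ hh₂.1
      have heq' : Sc (lam h₁)⁻¹ (fstar h₁) = Sc (lam h₂)⁻¹ (fstar h₂) := heq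
      have h2eq : deriv (deriv (Sc (lam h₁)⁻¹ (fstar h₁))) 0
          = deriv (deriv (Sc (lam h₂)⁻¹ (fstar h₂))) 0 := by rw [heq']
      rw [Sc_deriv2 _ _ htd₁.1 htd₁.2.1, Sc_deriv2 _ _ htd₂.1 htd₂.2.1] at h2eq
      simp only [mul_zero, hf2₁, hf2₂] at h2eq
      have h3 : (lam h₁)⁻¹ ^ 3 = (lam h₂)⁻¹ ^ 3 := mul_right_cancel₀ hw₀ h2eq
      have hc : (lam h₁)⁻¹ = (lam h₂)⁻¹ :=
        pos_pow_inj _ _ (inv_pos.2 hlp₁) (inv_pos.2 hlp₂) 3 (by norm_num) h3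
      have hll : lam h₁ = lam h₂ := by
        have := congrArg Inv.inv hc; simpa using this
      rw [← hl4₁, ← hl4₂, hll]
    · -- SurjOn
      intro f hf
      simp only [Set.mem_setOf_eq] at hf
      obtain ⟨htd, hsak, hf0, hf1, hftop⟩ := hf
      have hs := hsign f ⟨htd, hsak, hf0, hf1, hftop⟩
      have hf2ne : deriv (deriv f) 0 ≠ 0 := by
        intro h0; rw [h0] at hs; simp at hs
      have ht : 0 < w₀ / deriv (deriv f) 0 := by
        rw [← inv_div]; exact inv_pos.2 hs
      set c : ℝ := (w₀ / deriv (deriv f) 0) ^ ((1 : ℝ) / 3) with hcdef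
      have hcp : 0 < c := Real.rpow_pos_of_pos ht _
      have hc3 : c ^ 3 = w₀ / deriv (deriv f) 0 := cube_third _ ht.le
      set h : ℝ := c ^ 4 with hhdef
      have hh : 0 < h := by positivity
      have hhalf : h ^ ((1 : ℝ) / 2) = c ^ 2 := pow4_half c hcp.le
      -- g := Sc c f solves the IVP for h
      have hg : Sc c f = fstar h := by
        refine hivp_uniq h hh _ (Sc_threeDiff _ _ htd) (Sc_sakEq _ hcp _ htd hsak) ?_ ?_ ?_
        · show c * f (c * 0) = 0
          rw [mul_zero, hf0, mul_zero]
        · rw [Sc_deriv _ _ htd.1]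
          show c ^ 2 * deriv f (c * 0) = h ^ ((1 : ℝ) / 2)
          rw [mul_zero, hf1, hhalf, mul_one]
        · rw [Sc_deriv2 _ _ htd.1 htd.2.1]
          show c ^ 3 * deriv (deriv f) (c * 0) = w₀
          rw [mul_zero, hc3]
          field_simp
      have hL0 : L h = 0 := by
        have h1 : Tendsto (deriv (fstar h)) atTop (𝓝 0) := by
          rw [← hg]
          have := Sc_tendsto c hcp f htd.1 0 hftop
          rwa [mul_zero] at this
        exact tendsto_nhds_unique (hlim h hh) h1
      have hlamh : lam h = c := by
        rw [hlam, hL0, zero_add, hhalf, sq_half c hcp.le]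
      have hΓ0 : Γ h = 0 := by
        rw [hΓ, hlamh, hhdef]
        field_simp
        norm_num
      refine ⟨h, ⟨hh, hΓ0⟩, ?_⟩
      show Sc (lam h)⁻¹ (fstar h) = f
      rw [hlamh, ← hg, Sc_Sc' c hcp.ne' f]
  refine ⟨hbij, ?_⟩
  constructor
  · rintro ⟨f₀, hf₀, huniq⟩
    obtain ⟨h₀, hh₀, hmap⟩ := hbij.surjOn (show f₀ ∈ {f : ℝ → ℝ | SakSol f} from hf₀)
    refine ⟨h₀, hh₀, ?_⟩
    intro h hh
    apply hbij.injOn hh hh₀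
    exact (huniq _ (hbij.mapsTo hh)).trans hmap.symm
  · rintro ⟨h₀, hh₀, huniq⟩
    refine ⟨(fun h : ℝ => fun η : ℝ => (lam h)⁻¹ * fstar h ((lam h)⁻¹ * η)) h₀,
      hbij.mapsTo hh₀, ?_⟩
    intro f hf
    obtain ⟨h, hh, hmap⟩ := hbij.surjOn (show f ∈ {f : ℝ → ℝ | SakSol f} from hf)
    rw [← hmap, huniq h hh]
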